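/- arXiv:1209.1220 — 2 statements merged into one kernel-verified Lean document; each statement's English description precedes it below -/
import Mathlib

section
/- Let d ≥ 2 be even, S = {x ∈ F_q^d : a_1x_1² + ⋯ + a_dx_d² = 0}, and dσ the normalized surface measure on S, so (dσ)^∨(m) = |S|^{-1} Σ_{x∈S} χ(m·x). Then: (i) if m ≠ 0 and m_1²/a_1 + ⋯ + m_d²/a_d = 0, then (dσ)^∨(m) = (G_1^d/|S|)(1 - q^{-1}) η(a_1⋯a_d); (ii) if m_1²/a_1 + ⋯ + m_d²/a_d ≠ 0, then (dσ)^∨(m) = -(G_1^d/(q|S|)) η(a_1⋯a_d). -/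
/-! Writing the indicator of `S` as `q⁻¹ ∑_t χ(t Q(x))` with `Q(x) = ∑ aᵢ xᵢ²`, the sum
`∑_{x ∈ S} χ(m·x)` becomes `q⁻¹ ∑_t ∏_i ∑_u χ(t aᵢ u² + mᵢ u)`. For `m ≠ 0` the term `t = 0` vanishes; for `t ≠ 0`
completing the square turns each factor into `η(t aᵢ) G₁ χ(-mᵢ²/(4 t aᵢ))`, and since `d` is even
the factors `η(t)` cancel. What remains is `η(a₁⋯a_d) G₁^d ∑_{t ≠ 0} χ(-t⁻¹ M/4)` with
`M = ∑ mᵢ²/aᵢ`, a complete character sum minus its `t = 0` term. -/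

open Finset

def quadSurf {F : Type} [Field F] [Fintype F] [DecidableEq F] {d : ℕ}
    (a : Fin d → F) : Finset (Fin d → F) :=
  Finset.univ.filter (fun x => ∑ i, a i * x i ^ 2 = 0)

def dualSurf {F : Type} [Field F] [Fintype F] [DecidableEq F] {d : ℕ}
    (a : Fin d → F) : Finset (Fin d → F) :=
  Finset.univ.filter (fun m => ∑ i, m i ^ 2 * (a i)⁻¹ = 0)

noncomputable def gSum {F : Type} [Field F] [Fintype F] [DecidableEq F]
    (χ : AddChar F ℂ) : ℂ :=
  ∑ s ∈ Finset.univ.erase (0 : F), ((quadraticChar F s : ℤ) : ℂ) * χ s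

noncomputable def sigmaInv {F : Type} [Field F] [Fintype F] [DecidableEq F]
    (χ : AddChar F ℂ) {d : ℕ} (a : Fin d → F) (m : Fin d → F) : ℂ :=
  ((quadSurf a).card : ℂ)⁻¹ * ∑ x ∈ quadSurf a, χ (∑ i, m i * x i)

noncomputable def brKernel {F : Type} [Field F] [Fintype F] [DecidableEq F]
    (χ : AddChar F ℂ) {d : ℕ} (a : Fin d → F) (m : Fin d → F) : ℂ :=
  if m = 0 then 0 else sigmaInv χ a m

noncomputable def brKernelHat {F : Type} [Field F] [Fintype F] [DecidableEq F]
    (χ : AddChar F ℂ) {d : ℕ} (a : Fin d → F) (x : Fin d → F) : ℂ :=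
  ∑ m : Fin d → F, brKernel χ a m * χ (-(∑ i, m i * x i))

noncomputable def convInd {F : Type} [Field F] [Fintype F] [DecidableEq F]
    (χ : AddChar F ℂ) {d : ℕ} (a : Fin d → F) (E : Finset (Fin d → F))
    (x : Fin d → F) : ℂ :=
  ((Fintype.card F : ℂ) ^ d)⁻¹ *
    ∑ y : Fin d → F, (if x - y ∈ E then brKernelHat χ a y else 0)

noncomputable def convSig {F : Type} [Field F] [Fintype F] [DecidableEq F]
    {d : ℕ} (a : Fin d → F) (f : (Fin d → F) → ℂ) (x : Fin d → F) : ℂ :=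
  ((quadSurf a).card : ℂ)⁻¹ * ∑ y ∈ quadSurf a, f (x - y)

noncomputable def Lnorm {α : Type} [Fintype α] (r : ℝ) (g : α → ℂ) : ℝ :=
  ((Fintype.card α : ℝ)⁻¹ * ∑ x : α, ‖g x‖ ^ r) ^ (1 / r)

lemma AddChar.map_sum_eq_prod {A M ι : Type*} [AddCommMonoid A] [CommMonoid M]
    (ψ : AddChar A M) (s : Finset ι) (f : ι → A) :
    ψ (∑ i ∈ s, f i) = ∏ i ∈ s, ψ (f i) := by
  induction s using Finset.cons_induction with
  | empty => simp
  | cons i s hi ih => rw [sum_cons, prod_cons, AddChar.map_add_eq_mul, ih]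

lemma four_ne_zero_of_ringChar_ne_two {R : Type*} [Ring R] [Nontrivial R] [NoZeroDivisors R]
    (hR : ringChar R ≠ 2) : (4 : R) ≠ 0 := by
  simpa [show (4 : R) = 2 ^ 2 by norm_num] using pow_ne_zero 2 (Ring.two_ne_zero hR)

section FiniteField

variable {F : Type} [Field F] [Fintype F] [DecidableEq F] {χ : AddChar F ℂ}

lemma gSum_eq_sum (χ : AddChar F ℂ) :
    gSum χ = ∑ s, ((quadraticChar F s : ℤ) : ℂ) * χ s :=
  sum_erase _ (by simp)

lemma sum_addChar_mul (hχ : χ ≠ 1) (b : F) :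
    ∑ x, χ (x * b) = if b = 0 then (Fintype.card F : ℂ) else 0 := by
  rw [AddChar.sum_mulShift b (AddChar.IsPrimitive.of_ne_one hχ), Nat.cast_ite, Nat.cast_zero]

lemma sum_addChar_inv_mul (hχ : χ ≠ 1) (b : F) :
    ∑ t, χ (t⁻¹ * b) = if b = 0 then (Fintype.card F : ℂ) else 0 := by
  rw [← sum_addChar_mul hχ]
  exact Fintype.sum_equiv (Equiv.inv F) _ _ fun _ => rfl

lemma sum_addChar_mul_sq (hχ : χ ≠ 1) (hF : ringChar F ≠ 2) {c : F} (hc : c ≠ 0) :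
    ∑ x, χ (c * x ^ 2) = ((quadraticChar F c : ℤ) : ℂ) * gSum χ := by
  have hroots : ∀ y : F, ((#{x | x ^ 2 = y} : ℕ) : ℂ) = ((quadraticChar F y : ℤ) : ℂ) + 1 := by
    intro y
    exact_mod_cast by simpa [Set.toFinset_ofPred] using quadraticChar_card_sqrts hF y
  have hlin : ∑ y, χ (c * y) = 0 := by
    simpa [mul_comm c, hc] using sum_addChar_mul hχ c
  have hηc : ∀ y : F, ((quadraticChar F y : ℤ) : ℂ)
      = ((quadraticChar F c : ℤ) : ℂ) * ((quadraticChar F (c * y) : ℤ) : ℂ) := by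
    intro y
    rw [map_mul, Int.cast_mul, ← mul_assoc, ← sq, ← Int.cast_pow, quadraticChar_sq_one hc,
      Int.cast_one, one_mul]
  calc ∑ x, χ (c * x ^ 2)
      = ∑ y, ((#{x | x ^ 2 = y} : ℕ) : ℂ) * χ (c * y) := by
        rw [← sum_fiberwise' univ (fun x : F => x ^ 2) (fun y => χ (c * y))]
        simp [sum_const, nsmul_eq_mul]
    _ = ∑ y, ((quadraticChar F y : ℤ) : ℂ) * χ (c * y) := by
        simp only [hroots, add_mul, one_mul, sum_add_distrib, hlin, add_zero]
    _ = ((quadraticChar F c : ℤ) : ℂ) * ∑ y, ((quadraticChar F (c * y) : ℤ) : ℂ) * χ (c * y) := by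
        simp only [mul_sum, ← mul_assoc, ← hηc]
    _ = ((quadraticChar F c : ℤ) : ℂ) * gSum χ := by
        rw [gSum_eq_sum]
        exact congrArg _ (Fintype.sum_equiv (Equiv.mulLeft₀ c hc) _ _ fun _ => rfl)

lemma sum_addChar_quadratic (hχ : χ ≠ 1) (hF : ringChar F ≠ 2) {c : F} (hc : c ≠ 0) (b : F) :
    ∑ x, χ (c * x ^ 2 + b * x)
      = ((quadraticChar F c : ℤ) : ℂ) * gSum χ * χ (-b ^ 2 / (4 * c)) := by
  have h2 := Ring.two_ne_zero hF
  have h4 := four_ne_zero_of_ringChar_ne_two hF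
  have hsquare : ∀ y : F, c * (y - b / (2 * c)) ^ 2 + b * (y - b / (2 * c))
      = c * y ^ 2 + -b ^ 2 / (4 * c) := by
    intro y
    field_simp
    ring
  rw [← (Equiv.subRight (b / (2 * c))).sum_comp]
  simp only [Equiv.subRight_apply, hsquare, AddChar.map_add_eq_mul, ← sum_mul,
    sum_addChar_mul_sq hχ hF hc]

lemma prod_quadraticChar_mul_of_even {d : ℕ} (hd : Even d) {t : F} (ht : t ≠ 0) (a : Fin d → F) :
    ∏ i, quadraticChar F (t * a i) = quadraticChar F (∏ i, a i) := by
  obtain ⟨k, hk⟩ := hd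
  have hpow : quadraticChar F t ^ d = 1 := by
    rw [hk, ← two_mul, pow_mul, quadraticChar_sq_one ht, one_pow]
  rw [← map_prod, prod_mul_distrib, prod_const, card_univ, Fintype.card_fin, map_mul, map_pow,
    hpow, one_mul]

lemma card_mul_sum_quadSurf (hχ : χ ≠ 1) {d : ℕ} (a m : Fin d → F) :
    (Fintype.card F : ℂ) * ∑ x ∈ quadSurf a, χ (∑ i, m i * x i)
      = ∑ t, ∏ i, ∑ u, χ (t * a i * u ^ 2 + m i * u) := by
  have hsplit : ∀ (t : F) (x : Fin d → F), t * ∑ i, a i * x i ^ 2 + ∑ i, m i * x i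
      = ∑ i, (t * a i * x i ^ 2 + m i * x i) := by
    intro t x
    rw [mul_sum, ← sum_add_distrib]
    exact sum_congr rfl fun i _ => by ring
  calc (Fintype.card F : ℂ) * ∑ x ∈ quadSurf a, χ (∑ i, m i * x i)
      = ∑ x : Fin d → F, (∑ t, χ (t * ∑ i, a i * x i ^ 2)) * χ (∑ i, m i * x i) := by
        rw [quadSurf, sum_filter, mul_sum]
        refine sum_congr rfl fun x _ => ?_
        rw [sum_addChar_mul hχ]
        split_ifs <;> simp
    _ = ∑ t, ∑ x : Fin d → F, ∏ i, χ (t * a i * x i ^ 2 + m i * x i) := by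
        simp only [sum_mul]
        rw [sum_comm]
        refine sum_congr rfl fun t _ => sum_congr rfl fun x _ => ?_
        rw [← AddChar.map_add_eq_mul, hsplit, AddChar.map_sum_eq_prod]
    _ = ∑ t, ∏ i, ∑ u, χ (t * a i * u ^ 2 + m i * u) :=
        sum_congr rfl fun t _ => (Fintype.prod_sum fun i u => χ (t * a i * u ^ 2 + m i * u)).symm

lemma prod_sum_addChar_quadratic (hχ : χ ≠ 1) (hF : ringChar F ≠ 2) {d : ℕ} (hd : Even d)
    {a : Fin d → F} (ha : ∀ i, a i ≠ 0) (m : Fin d → F) {t : F} (ht : t ≠ 0) :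
    ∏ i, ∑ u, χ (t * a i * u ^ 2 + m i * u)
      = ((quadraticChar F (∏ i, a i) : ℤ) : ℂ) * gSum χ ^ d
        * χ (t⁻¹ * (-(∑ i, m i ^ 2 * (a i)⁻¹) / 4)) := by
  have h4 := four_ne_zero_of_ringChar_ne_two hF
  have hexp : ∀ i, -m i ^ 2 / (4 * (t * a i)) = t⁻¹ * (-(m i ^ 2 * (a i)⁻¹) / 4) := by
    intro i
    have := ha i
    field_simp
  simp only [sum_addChar_quadratic hχ hF (mul_ne_zero ht (ha _)), prod_mul_distrib, prod_const,
    card_univ, Fintype.card_fin, hexp, ← AddChar.map_sum_eq_prod, ← mul_sum, ← sum_div,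
    sum_neg_distrib]
  rw [← Int.cast_prod, prod_quadraticChar_mul_of_even hd ht]

theorem sum_quadSurf_addChar (hχ : χ ≠ 1) (hF : ringChar F ≠ 2) {d : ℕ} (hd : Even d)
    {a : Fin d → F} (ha : ∀ i, a i ≠ 0) {m : Fin d → F} (hm : m ≠ 0) :
    ∑ x ∈ quadSurf a, χ (∑ i, m i * x i)
      = ((quadraticChar F (∏ i, a i) : ℤ) : ℂ) * gSum χ ^ d
        * ((if ∑ i, m i ^ 2 * (a i)⁻¹ = 0 then 1 else 0) - (Fintype.card F : ℂ)⁻¹) := by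
  set M := ∑ i, m i ^ 2 * (a i)⁻¹
  have hq : (Fintype.card F : ℂ) ≠ 0 := Nat.cast_ne_zero.mpr Fintype.card_ne_zero
  have hzero : ∏ i, ∑ u, χ (0 * a i * u ^ 2 + m i * u) = 0 := by
    obtain ⟨j, hj⟩ := Function.ne_iff.mp hm
    refine prod_eq_zero (mem_univ j) ?_
    simpa [mul_comm (m j), show m j ≠ 0 from hj] using sum_addChar_mul hχ (m j)
  have hcompl : ∑ t ∈ {0}ᶜ, χ (t⁻¹ * (-M / 4))
      = (if M = 0 then (Fintype.card F : ℂ) else 0) - 1 := by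
    have hM : M = 0 ↔ -M / 4 = 0 := by simp [four_ne_zero_of_ringChar_ne_two hF]
    simp only [hM, ← sum_addChar_inv_mul hχ, Fintype.sum_eq_add_sum_compl (0 : F)]
    simp
  apply mul_left_cancel₀ hq
  rw [card_mul_sum_quadSurf hχ, Fintype.sum_eq_add_sum_compl (0 : F), hzero, zero_add,
    sum_congr rfl fun t ht => prod_sum_addChar_quadratic hχ hF hd ha m (by simpa using ht),
    ← mul_sum, hcompl]
  split_ifs
  · field_simp
  · field_simp
    ring

end FiniteField

theorem sigmaInv_eval_general
    (F : Type) [Field F] [Fintype F] [DecidableEq F]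
    (hq : Odd (Fintype.card F))
    (χ : AddChar F ℂ) (hχ : χ ≠ 1)
    (d : ℕ) (hdeven : Even d)
    (a : Fin d → F) (ha : ∀ i, a i ≠ 0) (m : Fin d → F) :
    (m ≠ 0 → (∑ i, m i ^ 2 * (a i)⁻¹) = 0 →
      sigmaInv χ a m
        = gSum χ ^ d / ((quadSurf a).card : ℂ) * (1 - (Fintype.card F : ℂ)⁻¹)
            * ((quadraticChar F (∏ i, a i) : ℤ) : ℂ)) ∧
    ((∑ i, m i ^ 2 * (a i)⁻¹) ≠ 0 →
      sigmaInv χ a m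
        = -(gSum χ ^ d) / ((Fintype.card F : ℂ) * ((quadSurf a).card : ℂ))
            * ((quadraticChar F (∏ i, a i) : ℤ) : ℂ)) := by
  have hF : ringChar F ≠ 2 := by
    rw [Ne, FiniteField.even_card_iff_char_two, Nat.odd_iff.mp hq]
    exact one_ne_zero
  refine ⟨fun hm hM => ?_, fun hM => ?_⟩
  · rw [sigmaInv, sum_quadSurf_addChar hχ hF hdeven ha hm, if_pos hM]
    ring
  · have hm : m ≠ 0 := by rintro rfl; simp at hM
    rw [sigmaInv, sum_quadSurf_addChar hχ hF hdeven ha hm, if_neg hM, zero_sub]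
    field_simp

/-- Explicit values of (dσ)^∨(m) for the diagonal quadratic surface, d even:
(i) if m ≠ 0 lies on the dual surface, (dσ)^∨(m) = (G₁^d/|S|)(1-q⁻¹)η(a₁⋯a_d);
(ii) if m is off the dual surface, (dσ)^∨(m) = -(G₁^d/(q|S|))η(a₁⋯a_d). -/
theorem sigmaInv_eval
    (F : Type) [Field F] [Fintype F] [DecidableEq F]
    (hq : Odd (Fintype.card F))
    (χ : AddChar F ℂ) (hχ : χ ≠ 1)
    (d : ℕ) (hd2 : 2 ≤ d) (hdeven : Even d)
    (a : Fin d → F) (ha : ∀ i, a i ≠ 0) (m : Fin d → F) :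
    (m ≠ 0 → (∑ i, m i ^ 2 * (a i)⁻¹) = 0 →
      sigmaInv χ a m
        = gSum χ ^ d / ((quadSurf a).card : ℂ) * (1 - (Fintype.card F : ℂ)⁻¹)
            * ((quadraticChar F (∏ i, a i) : ℤ) : ℂ)) ∧
    ((∑ i, m i ^ 2 * (a i)⁻¹) ≠ 0 →
      sigmaInv χ a m
        = -(gSum χ ^ d) / ((Fintype.card F : ℂ) * ((quadSurf a).card : ℂ))
            * ((quadraticChar F (∏ i, a i) : ℤ) : ℂ)) :=
  sigmaInv_eval_general F hq χ hχ d hdeven a ha m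
end

section
/- Let d ≥ 4 be even, q an odd prime power, and S_a = {m ∈ F_q^d : m_1²/a_1 + ⋯ + m_d²/a_d = 0} with all a_j nonzero. Then for any finite subset E ⊂ F_q^d, Σ_{m ∈ S_a} |Σ_{x∈E} χ(−m·x)|² ≤ C (q^{d-1} |E| + q^{d/2} |E|²) for an absolute constant C. -/
open Finset

/-! Expanding the square, the energy is `∑_{x, y ∈ E} T (y - x)` with `T z = ∑_{m ∈ S_a} χ (m · z)`.
Detecting the equation of `S_a` by a sum over `t ∈ F` gives
`q T z = ∑_t ∏_i ∑_u χ (t u² / a_i + z_i u)`: the term `t = 0` is `q^d` if `z = 0` and vanishes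
otherwise, and each term `t ≠ 0` is a product of `d` quadratic Gauss sums of modulus `√q`.
Hence `‖T z‖ ≤ q^(d-1) [z = 0] + q^(d/2)`, and summing over `x, y ∈ E` gives the bound
with `C = 1`. -/

namespace AddChar

variable {A M : Type*} [AddCommMonoid A] [CommMonoid M]

lemma map_sum_eq_prod_s15 (ψ : AddChar A M) {ι : Type*} (s : Finset ι) (f : ι → A) :
    ψ (∑ i ∈ s, f i) = ∏ i ∈ s, ψ (f i) := by
  classical
  induction s using Finset.induction_on with
  | empty => simp
  | insert i s hi ih => rw [sum_insert hi, prod_insert hi, map_add_eq_mul, ih]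

end AddChar

lemma sum_norm_sq_sum_char_le {R ι : Type*} [CommRing R] [Finite R] [Fintype ι]
    (χ : AddChar R ℂ) (S E : Finset (ι → R)) :
    ∑ m ∈ S, ‖∑ x ∈ E, χ (-(∑ i, m i * x i))‖ ^ 2
      ≤ ∑ x ∈ E, ∑ y ∈ E, ‖∑ m ∈ S, χ (∑ i, m i * (y - x) i)‖ := by
  have expand : ((∑ m ∈ S, ‖∑ x ∈ E, χ (-(∑ i, m i * x i))‖ ^ 2 : ℝ) : ℂ)
      = ∑ x ∈ E, ∑ y ∈ E, ∑ m ∈ S, χ (∑ i, m i * (y - x) i) := by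
    push_cast
    simp_rw [← Complex.mul_conj', map_sum, ← AddChar.map_neg_eq_conj, neg_neg, sum_mul_sum,
      ← AddChar.map_add_eq_mul]
    rw [sum_comm]
    refine sum_congr rfl fun x _ => ?_
    rw [sum_comm]
    refine sum_congr rfl fun y _ => sum_congr rfl fun m _ => ?_
    simp only [Pi.sub_apply, mul_sub, sum_sub_distrib, neg_add_eq_sub]
  calc _ = ‖((∑ m ∈ S, ‖∑ x ∈ E, χ (-(∑ i, m i * x i))‖ ^ 2 : ℝ) : ℂ)‖ := by
        rw [Complex.norm_real, Real.norm_of_nonneg (by positivity)]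
    _ ≤ _ := by
        rw [expand]
        exact (norm_sum_le _ _).trans (sum_le_sum fun x _ => norm_sum_le _ _)

section FiniteField

variable {F : Type} [Field F] [Fintype F] [DecidableEq F] {χ : AddChar F ℂ}

lemma sum_char_mul_eq_ite (hχ : χ ≠ 1) (b : F) :
    ∑ u : F, χ (u * b) = if b = 0 then (Fintype.card F : ℂ) else 0 := by
  simpa using AddChar.sum_mulShift b (AddChar.IsPrimitive.of_ne_one hχ)

lemma norm_sq_sum_char_quadratic (h2 : (2 : F) ≠ 0) (hχ : χ ≠ 1) {c : F} (hc : c ≠ 0) (b : F) :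
    ‖∑ u : F, χ (c * u ^ 2 + b * u)‖ ^ 2 = Fintype.card F := by
  set f : F → F := fun u => c * u ^ 2 + b * u
  -- substituting `u = v + w` makes `f u - f v` affine in `v`
  have shift : ∀ v w, f (v + w) + -f v = f w + v * (2 * c * w) := fun v w => by simp only [f]; ring
  have : ((‖∑ u : F, χ (f u)‖ ^ 2 : ℝ) : ℂ) = Fintype.card F := by
    calc ((‖∑ u : F, χ (f u)‖ ^ 2 : ℝ) : ℂ)
        = ∑ v : F, ∑ u : F, χ (f u + -f v) := by
          push_cast
          rw [← Complex.mul_conj', map_sum, sum_mul_sum, sum_comm]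
          simp_rw [← AddChar.map_neg_eq_conj, AddChar.map_add_eq_mul]
      _ = ∑ v : F, ∑ w : F, χ (f w + v * (2 * c * w)) := by
          refine sum_congr rfl fun v _ => ?_
          rw [← Equiv.sum_comp (Equiv.addLeft v)]
          simp only [Equiv.coe_addLeft, shift]
      _ = ∑ w : F, χ (f w) * ∑ v : F, χ (v * (2 * c * w)) := by
          rw [sum_comm]
          simp_rw [AddChar.map_add_eq_mul, mul_sum]
      _ = Fintype.card F := by
          simp [sum_char_mul_eq_ite hχ, h2, hc, f]
  exact_mod_cast this

lemma norm_prod_sum_char_quadratic (h2 : (2 : F) ≠ 0) (hχ : χ ≠ 1) {d : ℕ} (hd : Even d)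
    {c : Fin d → F} (hc : ∀ i, c i ≠ 0) (b : Fin d → F) :
    ‖∏ i, ∑ u : F, χ (c i * u ^ 2 + b i * u)‖ = (Fintype.card F : ℝ) ^ (d / 2) := by
  have hfactor : ∀ i, ‖∑ u : F, χ (c i * u ^ 2 + b i * u)‖ = √(Fintype.card F) := fun i => by
    rw [← norm_sq_sum_char_quadratic h2 hχ (hc i) (b i), Real.sqrt_sq (norm_nonneg _)]
  obtain ⟨k, rfl⟩ := hd
  rw [norm_prod, prod_congr rfl fun i _ => hfactor i, prod_const, card_univ, Fintype.card_fin,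
    ← two_mul, pow_mul, Real.sq_sqrt (Nat.cast_nonneg _), Nat.mul_div_cancel_left _ two_pos]

lemma prod_sum_char_mul_eq_ite (hχ : χ ≠ 1) {d : ℕ} (z : Fin d → F) :
    ∏ i, ∑ u : F, χ (u * z i) = if z = 0 then (Fintype.card F : ℂ) ^ d else 0 := by
  simp_rw [sum_char_mul_eq_ite hχ]
  split_ifs with hz
  · simp [hz]
  · obtain ⟨i, hi⟩ := Function.ne_iff.mp hz
    exact prod_eq_zero (mem_univ i) (if_neg hi)

lemma card_mul_sum_dualSurf (hχ : χ ≠ 1) {d : ℕ} (a z : Fin d → F) :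
    (Fintype.card F : ℂ) * ∑ m ∈ dualSurf a, χ (∑ i, m i * z i)
      = ∑ t : F, ∏ i, ∑ u : F, χ (t * (a i)⁻¹ * u ^ 2 + z i * u) := by
  have hsplit : ∀ (t : F) (m : Fin d → F), ∑ i, (t * (a i)⁻¹ * m i ^ 2 + z i * m i)
      = t * ∑ i, m i ^ 2 * (a i)⁻¹ + ∑ i, m i * z i := fun t m => by
    rw [mul_sum, ← sum_add_distrib]
    exact sum_congr rfl fun i _ => by ring
  simp_rw [Fintype.prod_sum, ← AddChar.map_sum_eq_prod_s15, hsplit, AddChar.map_add_eq_mul]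
  rw [sum_comm]
  simp_rw [← sum_mul, sum_char_mul_eq_ite hχ, dualSurf, sum_filter, mul_sum, ite_mul, zero_mul,
    mul_ite, mul_zero]

lemma norm_sum_dualSurf_le (h2 : (2 : F) ≠ 0) (hχ : χ ≠ 1) {d : ℕ} (hd : Even d)
    {a : Fin d → F} (ha : ∀ i, a i ≠ 0) (z : Fin d → F) :
    ‖∑ m ∈ dualSurf a, χ (∑ i, m i * z i)‖
      ≤ (if z = 0 then (Fintype.card F : ℝ) ^ (d - 1) else 0)
        + (Fintype.card F : ℝ) ^ (d / 2) := by
  set q : ℝ := (Fintype.card F : ℝ)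
  have hq : 1 ≤ q := Nat.one_le_cast.mpr Fintype.card_pos
  set P : F → ℂ := fun t => ∏ i, ∑ u : F, χ (t * (a i)⁻¹ * u ^ 2 + z i * u)
  have hP0 : ‖P 0‖ = if z = 0 then q ^ d else 0 := by
    simp only [P, zero_mul, zero_add, mul_comm (z _)]
    rw [prod_sum_char_mul_eq_ite hχ]
    split_ifs <;> simp [q]
  have hP : ∀ t ≠ 0, ‖P t‖ = q ^ (d / 2) := fun t ht =>
    norm_prod_sum_char_quadratic h2 hχ hd (fun i => mul_ne_zero ht (inv_ne_zero (ha i))) z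
  have key : q * ‖∑ m ∈ dualSurf a, χ (∑ i, m i * z i)‖
      ≤ (if z = 0 then q ^ d else 0) + q * q ^ (d / 2) := by
    calc q * ‖∑ m ∈ dualSurf a, χ (∑ i, m i * z i)‖ = ‖∑ t, P t‖ := by
          rw [← card_mul_sum_dualSurf hχ, norm_mul, Complex.norm_natCast]
      _ = ‖P 0 + ∑ t ∈ univ.erase 0, P t‖ := by rw [add_sum_erase _ _ (mem_univ 0)]
      _ ≤ ‖P 0‖ + ∑ t ∈ univ.erase 0, ‖P t‖ :=
          (norm_add_le _ _).trans (add_le_add_right (norm_sum_le _ _) _)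
      _ = (if z = 0 then q ^ d else 0) + (q - 1) * q ^ (d / 2) := by
          rw [hP0, sum_congr rfl fun t ht => hP t (ne_of_mem_erase ht), sum_const,
            card_erase_of_mem (mem_univ _), card_univ, nsmul_eq_mul,
            Nat.cast_sub Fintype.card_pos, Nat.cast_one]
      _ ≤ (if z = 0 then q ^ d else 0) + q * q ^ (d / 2) := by gcongr; linarith
  have hpow : q ^ d ≤ q * q ^ (d - 1) := by
    rw [← pow_succ']
    exact pow_le_pow_right₀ hq (by omega)
  refine le_of_mul_le_mul_left (key.trans ?_) (by positivity)
  rw [mul_add]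
  split_ifs <;> linarith

end FiniteField

/-- Incidence bound: ∑_{m ∈ S_a} |∑_{x∈E} χ(-m·x)|² ≤ C (q^{d-1}|E| + q^{d/2}|E|²)
for an absolute constant C, where S_a is the dual diagonal quadratic surface. -/
theorem dualSurf_energy_bound :
    ∃ C : ℝ, 0 < C ∧
      ∀ (F : Type) [Field F] [Fintype F] [DecidableEq F],
        Odd (Fintype.card F) →
        ∀ (χ : AddChar F ℂ), χ ≠ 1 →
        ∀ (d : ℕ), 4 ≤ d → Even d →
        ∀ (a : Fin d → F), (∀ i, a i ≠ 0) →
        ∀ (E : Finset (Fin d → F)),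
          ∑ m ∈ dualSurf a,
              ‖∑ x ∈ E, χ (-(∑ i, m i * x i))‖ ^ 2
            ≤ C * ((Fintype.card F : ℝ) ^ (d - 1) * (E.card : ℝ)
                + (Fintype.card F : ℝ) ^ (d / 2) * (E.card : ℝ) ^ 2) := by
  refine ⟨1, one_pos, fun F _ _ _ hq χ hχ d _ hd a ha E => ?_⟩
  have h2 : (2 : F) ≠ 0 := Ring.two_ne_zero fun hchar =>
    Nat.not_even_iff_odd.mpr hq (Nat.even_iff.mpr (FiniteField.even_card_of_char_two hchar))
  calc _ ≤ ∑ x ∈ E, ∑ y ∈ E, ‖∑ m ∈ dualSurf a, χ (∑ i, m i * (y - x) i)‖ :=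
        sum_norm_sq_sum_char_le χ _ E
    _ ≤ ∑ x ∈ E, ∑ y ∈ E, ((if y - x = 0 then (Fintype.card F : ℝ) ^ (d - 1) else 0)
          + (Fintype.card F : ℝ) ^ (d / 2)) := by
        gcongr with x _ y _
        exact norm_sum_dualSurf_le h2 hχ hd ha _
    _ = _ := by
        simp only [sub_eq_zero, sum_add_distrib, sum_ite_eq', sum_const, nsmul_eq_mul, sum_ite_mem,
          inter_self]
        ring
end
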